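/- arXiv:2201.05052 — 4 statements merged into one kernel-verified Lean document; each statement's English description precedes it below -/
import Mathlib

section
/- Let Γ be a group with finite presentation ⟨S ∣ R⟩ where every relator in R is a reduced word of length at most n₀. If n ≥ n₀ and there is a local embedding of the ball B_S(n) into a finite group Q, then there is a homomorphism Γ → Q injective on B_S(n). Consequently, if Γ is finitely presented and LEF then Γ is residually finite. -/
/-- The ball of radius `n` in the word metric with respect to a set `S`. -/
def wordBall {G : Type*} [Group G] (S : Set G) (n : ℕ) : Set G :=
  {x | ∃ l : List G, l.length ≤ n ∧ (∀ y ∈ l, y ∈ S ∪ S⁻¹) ∧ l.prod = x}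

/-- A local embedding of the subset `F` into `Q`: an injective partial homomorphism. -/
def IsLocalEmbedding {G Q : Type*} [Group G] [Group Q] (F : Set G) (π : G → Q) : Prop :=
  Set.InjOn π F ∧ ∀ g h : G, g ∈ F → h ∈ F → g * h ∈ F → π (g * h) = π g * π h

lemma one_mem_wordBall {G : Type*} [Group G] (S : Set G) (n : ℕ) : (1 : G) ∈ wordBall S n :=
  ⟨[], by simp, by simp, rfl⟩

lemma mem_wordBall_of_mem {G : Type*} [Group G] {S : Set G} {x : G} (hx : x ∈ S ∪ S⁻¹) {n : ℕ}
    (hn : 1 ≤ n) : x ∈ wordBall S n := ⟨[x], by simpa, by simpa, by simp⟩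

lemma le_pi_one {G Q : Type*} [Group G] [Group Q] {S : Set G} {n : ℕ} {π : G → Q}
    (hπ : IsLocalEmbedding (wordBall S n) π) : π 1 = 1 := by
  have h := hπ.2 1 1 (one_mem_wordBall S n) (one_mem_wordBall S n)
    (by simpa using one_mem_wordBall S n)
  rw [mul_one] at h
  exact left_eq_mul.mp h

lemma pi_inv {G Q : Type*} [Group G] [Group Q] {S : Set G} {n : ℕ} {π : G → Q}
    (hπ : IsLocalEmbedding (wordBall S n) π) {s : G} (hs : s ∈ S ∪ S⁻¹) (hn : 1 ≤ n) :
    π s⁻¹ = (π s)⁻¹ := by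
  have hs' : s⁻¹ ∈ S ∪ S⁻¹ := by
    rcases hs with h | h
    · exact Or.inr (by simpa using h)
    · exact Or.inl (by simpa using h)
  have h := hπ.2 s s⁻¹ (mem_wordBall_of_mem hs hn) (mem_wordBall_of_mem hs' hn)
    (by simpa using one_mem_wordBall S n)
  rw [mul_inv_cancel, le_pi_one hπ] at h
  exact (inv_eq_of_mul_eq_one_right h.symm).symm

lemma pi_prod {G Q : Type*} [Group G] [Group Q] {S : Set G} {n : ℕ} {π : G → Q}
    (hπ : IsLocalEmbedding (wordBall S n) π) :
    ∀ l : List G, l.length ≤ n → (∀ y ∈ l, y ∈ S ∪ S⁻¹) → π l.prod = (l.map π).prod := by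
  intro l
  induction l using List.reverseRecOn with
  | nil => simpa using le_pi_one hπ
  | append_singleton l s ih =>
    intro hlen hmem
    have hlen' : l.length + 1 ≤ n := by simpa using hlen
    have h1 : l.prod ∈ wordBall S n :=
      ⟨l, by omega, fun y hy => hmem y (by simp [hy]), rfl⟩
    have hs : s ∈ wordBall S n := mem_wordBall_of_mem (hmem s (by simp)) (by omega)
    have hls : l.prod * s ∈ wordBall S n := ⟨l ++ [s], hlen, hmem, by simp⟩
    rw [List.prod_append, List.map_append, List.prod_append, List.prod_singleton,
      List.map_singleton, List.prod_singleton, hπ.2 _ _ h1 hs hls,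
      ih (by omega) (fun y hy => hmem y (by simp [hy]))]

lemma wordBall_finite {G : Type*} [Group G] {S : Set G} (hS : S.Finite) (n : ℕ) :
    (wordBall S n).Finite := by
  induction n with
  | zero =>
    refine (Set.finite_singleton 1).subset ?_
    rintro x ⟨l, hl, -, rfl⟩
    rw [List.length_eq_zero_iff.mp (Nat.le_zero.mp hl)]
    simp
  | succ n ih =>
    refine (((hS.union hS.inv).mul ih).insert 1).subset ?_
    rintro x ⟨l, hl, hm, rfl⟩
    cases l with
    | nil => simp
    | cons a t =>
      right
      exact Set.mul_mem_mul (hm a (by simp))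
        ⟨t, by simpa using Nat.succ_le_succ_iff.mp (by simpa using hl),
          fun y hy => hm y (by simp [hy]), rfl⟩

/-- The extension lemma: a local embedding of the `n`-ball, `n ≥ n₀`, extends to a genuine
homomorphism agreeing with it on the `n`-ball. -/
lemma extend_aux {α : Type} (rels : Set (FreeGroup α)) (n₀ : ℕ)
    (hrels : ∀ r ∈ rels, r ∈ wordBall (Set.range (FreeGroup.of : α → FreeGroup α)) n₀)
    (n : ℕ) (hn : n₀ ≤ n)
    (Q : Type*) [Group Q] (π : PresentedGroup rels → Q)
    (hπ : IsLocalEmbedding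
      (wordBall (Set.range (PresentedGroup.of : α → PresentedGroup rels)) n) π) :
    ∃ φ : PresentedGroup rels →* Q,
      ∀ g ∈ wordBall (Set.range (PresentedGroup.of : α → PresentedGroup rels)) n, φ g = π g := by
  set S : Set (PresentedGroup rels) := Set.range PresentedGroup.of with hS
  set f : α → Q := fun a => π (PresentedGroup.of a) with hf
  -- each letter maps as expected
  have hletter : ∀ n' : ℕ, 1 ≤ n' → n' ≤ n →
      ∀ x ∈ (Set.range (FreeGroup.of : α → FreeGroup α)) ∪
        (Set.range (FreeGroup.of : α → FreeGroup α))⁻¹,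
      FreeGroup.lift f x = π (PresentedGroup.mk rels x) ∧
        PresentedGroup.mk rels x ∈ S ∪ S⁻¹ := by
    intro n' hn1 hn2 x hx
    rcases hx with ⟨a, rfl⟩ | hx
    · exact ⟨by simp [hf]; rfl, Or.inl ⟨a, rfl⟩⟩
    · obtain ⟨a, ha⟩ := Set.mem_inv.mp hx
      obtain rfl : x = (FreeGroup.of a)⁻¹ := inv_eq_iff_eq_inv.mp ha.symm
      have hmem : PresentedGroup.of (rels := rels) a ∈ S ∪ S⁻¹ := Or.inl ⟨a, rfl⟩
      refine ⟨?_, ?_⟩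
      · rw [map_inv, map_inv, FreeGroup.lift_apply_of]
        rw [show PresentedGroup.mk rels (FreeGroup.of a) = PresentedGroup.of a from rfl]
        rw [pi_inv hπ hmem (le_trans hn1 hn2), hf]
      · rw [map_inv]
        rw [show PresentedGroup.mk rels (FreeGroup.of a) = PresentedGroup.of a from rfl]
        exact Or.inr (Set.inv_mem_inv.mpr ⟨a, rfl⟩)
  have hrel1 : ∀ r ∈ rels, FreeGroup.lift f r = 1 := by
    intro r hr
    obtain ⟨l, hlen, hmem, rfl⟩ := hrels r hr
    cases l with
    | nil => simp
    | cons b t =>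
      have h1 : 1 ≤ (b :: t).length := by simp
      have h2 : (b :: t).length ≤ n := le_trans hlen hn
      have hmk1 : PresentedGroup.mk rels (b :: t).prod = 1 :=
        (QuotientGroup.eq_one_iff _).mpr (Subgroup.subset_normalClosure hr)
      have key : ((b :: t).map (FreeGroup.lift f)).prod =
          (((b :: t).map (PresentedGroup.mk rels)).map π).prod := by
        rw [List.map_map]
        exact List.map_congr_left (fun x hx => (hletter _ h1 h2 x (hmem x hx)).1) ▸ rfl
      rw [map_list_prod, key, ← pi_prod hπ _ (by simpa using h2)
        (fun y hy => by
          obtain ⟨x, hx, rfl⟩ := List.mem_map.mp hy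
          exact (hletter _ h1 h2 x (hmem x hx)).2),
        ← map_list_prod, hmk1, le_pi_one hπ]
  refine ⟨PresentedGroup.toGroup hrel1, ?_⟩
  rintro g ⟨l, hlen, hmem, rfl⟩
  cases l with
  | nil => simp [le_pi_one hπ]
  | cons b t =>
    have hn1 : 1 ≤ n := le_trans (by simp) hlen
    rw [map_list_prod, pi_prod hπ _ hlen hmem]
    congr 1
    refine List.map_congr_left (fun x hx => ?_)
    rcases hmem x hx with ⟨a, rfl⟩ | hx'
    · exact PresentedGroup.toGroup.of hrel1
    · obtain ⟨a, ha⟩ := Set.mem_inv.mp hx'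
      obtain rfl : x = (PresentedGroup.of a)⁻¹ := inv_eq_iff_eq_inv.mp ha.symm
      rw [map_inv, PresentedGroup.toGroup.of hrel1,
        pi_inv hπ (Or.inl ⟨a, rfl⟩ : PresentedGroup.of a ∈ S ∪ S⁻¹) hn1]

/-- Let `Γ = ⟨S ∣ R⟩` be a finitely presented group all of whose
relators have length at most `n₀`.  If `n ≥ n₀` and `B_S(n)` admits a local
embedding into a finite group `Q`, then there is a genuine homomorphism
`Γ → Q` injective on `B_S(n)`.  Consequently a finitely presented LEF group is
residually finite. -/
theorem presented_local_embedding_extends {α : Type} [Fintype α]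
    (rels : Set (FreeGroup α)) (n₀ : ℕ)
    (hrels : ∀ r ∈ rels, r ∈ wordBall (Set.range (FreeGroup.of : α → FreeGroup α)) n₀)
    (n : ℕ) (hn : n₀ ≤ n)
    (Q : Type) [Group Q] [Fintype Q] (π : PresentedGroup rels → Q)
    (hπ : IsLocalEmbedding
      (wordBall (Set.range (PresentedGroup.of : α → PresentedGroup rels)) n) π) :
    (∃ φ : PresentedGroup rels →* Q,
      Set.InjOn φ (wordBall (Set.range (PresentedGroup.of : α → PresentedGroup rels)) n)) ∧
    ((∀ F : Finset (PresentedGroup rels),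
        ∃ (Q' : Type) (_ : Group Q') (_ : Fintype Q') (π' : PresentedGroup rels → Q'),
          IsLocalEmbedding (F : Set (PresentedGroup rels)) π') →
      ∀ g : PresentedGroup rels, g ≠ 1 →
        ∃ (H : Type) (_ : Group H) (_ : Fintype H) (ψ : PresentedGroup rels →* H),
          ψ g ≠ 1) := by
  constructor
  · obtain ⟨φ, hφ⟩ := extend_aux rels n₀ hrels n hn Q π hπ
    exact ⟨φ, fun x hx y hy h => hπ.1 hx hy (by rw [← hφ x hx, ← hφ y hy, h])⟩
  · intro hLEF g hg
    set S : Set (PresentedGroup rels) := Set.range PresentedGroup.of with hSdef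
    -- g is a product of generators and inverses
    have hgmem : g ∈ Submonoid.closure (S ∪ S⁻¹) := by
      have h1 : g ∈ Subgroup.closure S := by
        rw [hSdef, PresentedGroup.closure_range_of]; trivial
      rw [← Subgroup.mem_toSubmonoid, Subgroup.closure_toSubmonoid] at h1
      exact h1
    obtain ⟨l, hlmem, hlprod⟩ := Submonoid.exists_list_of_mem_closure hgmem
    set m : ℕ := max n₀ l.length with hm
    have hball : g ∈ wordBall S m := ⟨l, le_max_right _ _, hlmem, hlprod⟩
    -- the m-ball is finite
    have hfin : (wordBall S m).Finite := wordBall_finite (Set.finite_range _) m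
    obtain ⟨Q', iG, iF, π', hπ'⟩ := hLEF hfin.toFinset
    rw [Set.Finite.coe_toFinset] at hπ'
    obtain ⟨φ, hφ⟩ := extend_aux rels n₀ hrels m (le_max_left _ _) Q' π' hπ'
    refine ⟨Q', iG, iF, φ, fun h => hg ?_⟩
    have h1 : φ g = φ 1 := by rw [h, map_one]
    exact hπ'.1 hball (one_mem_wordBall S m)
      (by rw [← hφ g hball, ← hφ 1 (one_mem_wordBall S m), h1])
end

section
/- Let Γ act transitively on an infinite set Ω. Then the semidirect product S(Γ,Ω) = FSym(Ω) ⋊ Γ (with Γ acting on finitely supported permutations by conjugation via the action) is not residually finite. -/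
/-- The group of finitely supported permutations of `Ω`, as a subgroup of
`Equiv.Perm Ω`. -/
def FSym (Ω : Type*) : Subgroup (Equiv.Perm Ω) where
  carrier := {σ | {x | σ x ≠ x}.Finite}
  one_mem' := by
    have h : {x : Ω | (1 : Equiv.Perm Ω) x ≠ x} = ∅ := by ext x; simp
    show ({x : Ω | (1 : Equiv.Perm Ω) x ≠ x}).Finite
    rw [h]; exact Set.finite_empty
  mul_mem' := by
    intro σ τ hσ hτ
    apply (Set.Finite.union hσ hτ).subset
    intro x hx
    by_cases h : τ x = x
    · left
      simpa [Equiv.Perm.mul_apply, h] using hx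
    · right; exact h
  inv_mem' := by
    intro σ hσ
    apply hσ.subset
    intro x hx
    simp only [Set.mem_setOf_eq] at hx ⊢
    intro h
    exact hx (σ.injective (by simp [h]))

instance FSym.normal (Ω : Type*) : (FSym Ω).Normal := by
  constructor
  intro σ hσ τ
  show {x | (τ * σ * τ⁻¹ : Equiv.Perm Ω) x ≠ x}.Finite
  apply (Set.Finite.image τ hσ).subset
  intro x hx
  simp only [Set.mem_setOf_eq, Equiv.Perm.mul_apply] at hx
  refine ⟨τ⁻¹ x, ?_, by simp⟩
  intro h
  exact hx (by rw [h]; simp)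

/-- The action of `Γ` on `FSym Ω` induced by an action of `Γ` on `Ω`. -/
def fsymConj (Γ Ω : Type*) [Group Γ] [MulAction Γ Ω] : Γ →* MulAut (FSym Ω) :=
  MulAut.conjNormal.comp (MulAction.toPermHom Γ Ω)

/-!
Every homomorphism `φ` from `FSym Ω` to a finite group kills all double transpositions. Indeed,
by pigeonhole two of infinitely many disjoint transpositions `τ, τ'` have the same image, so
`φ (τ * τ') = φ τ ^ 2 = φ (τ ^ 2) = 1`; and all double transpositions are conjugate in `FSym Ω`.
Hence a double transposition, a nontrivial element of `FSym Ω ≤ S(Γ,Ω)`, survives in no finite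
quotient.
-/

open Equiv Function

namespace FSym

variable {Ω : Type*}

theorem swap_mem [DecidableEq Ω] (a b : Ω) : swap a b ∈ FSym Ω :=
  (Set.toFinite {a, b}).subset fun x hx => by
    by_contra hab
    simp only [Set.mem_insert_iff, Set.mem_singleton_iff, not_or] at hab
    exact hx (swap_apply_of_ne_of_ne hab.1 hab.2)

theorem ofSubtype_mem {s : Set Ω} [DecidablePred (· ∈ s)] (hs : s.Finite) (σ : Perm s) :
    Perm.ofSubtype σ ∈ FSym Ω :=
  hs.subset fun x hx => by
    by_contra hxs
    exact hx (Perm.ofSubtype_apply_of_not_mem σ hxs)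

theorem exists_mem_apply_eq {ι : Type*} [Finite ι] {f g : ι → Ω}
    (hf : Injective f) (hg : Injective g) : ∃ π ∈ FSym Ω, ∀ i, π (f i) = g i := by
  classical
  set s := Set.range f ∪ Set.range g
  obtain ⟨σ, hσ⟩ := Perm.exists_extending_pair (β := s)
    (fun i => ⟨f i, .inl ⟨i, rfl⟩⟩) (fun i => ⟨g i, .inr ⟨i, rfl⟩⟩)
    (fun i j h => hf (congrArg Subtype.val h)) (fun i j h => hg (congrArg Subtype.val h))
  refine ⟨Perm.ofSubtype σ, ofSubtype_mem ((Set.finite_range f).union (Set.finite_range g)) σ,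
    fun i => ?_⟩
  rw [Perm.ofSubtype_apply_of_mem σ (.inl ⟨i, rfl⟩), hσ]

variable [DecidableEq Ω]

def doubleSwap (x : Fin 4 → Ω) : FSym Ω :=
  ⟨swap (x 0) (x 1) * swap (x 2) (x 3), mul_mem (swap_mem _ _) (swap_mem _ _)⟩

theorem doubleSwap_ne_one {x : Fin 4 → Ω} (hx : Injective x) : doubleSwap x ≠ 1 := by
  intro h
  have hx1 : (swap (x 0) (x 1) * swap (x 2) (x 3)) (x 1) = x 1 :=
    congrArg (fun σ : FSym Ω => (σ : Perm Ω) (x 1)) h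
  rw [Perm.mul_apply, swap_apply_of_ne_of_ne (hx.ne (by decide)) (hx.ne (by decide)),
    swap_apply_right] at hx1
  exact hx.ne (by decide) hx1

theorem conj_doubleSwap (π : FSym Ω) (x : Fin 4 → Ω) :
    π * doubleSwap x * π⁻¹ = doubleSwap (π ∘ x) := by
  ext1
  simp only [doubleSwap, Subgroup.coe_mul, Subgroup.coe_inv, comp_apply, swap_apply_apply]
  group

theorem isConj_doubleSwap {x y : Fin 4 → Ω} (hx : Injective x) (hy : Injective y) :
    IsConj (doubleSwap x) (doubleSwap y) := by
  obtain ⟨π, hπ, hπxy⟩ := exists_mem_apply_eq hx hy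
  refine isConj_iff.mpr ⟨⟨π, hπ⟩, ?_⟩
  rw [conj_doubleSwap]
  exact congrArg doubleSwap (funext hπxy)

variable [Infinite Ω]

theorem exists_map_doubleSwap_eq_one {H : Type*} [Group H] [Finite H] (φ : FSym Ω →* H) :
    ∃ x : Fin 4 → Ω, Injective x ∧ φ (doubleSwap x) = 1 := by
  set e := Infinite.natEmbedding Ω
  let τ (i : ℕ) : FSym Ω := ⟨swap (e (2 * i)) (e (2 * i + 1)), swap_mem _ _⟩
  obtain ⟨i, j, hij, hφij⟩ := Finite.exists_ne_map_eq_of_infinite (φ ∘ τ)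
  refine ⟨e ∘ ![2 * i, 2 * i + 1, 2 * j, 2 * j + 1], e.injective.comp ?_, ?_⟩
  · intro k l hkl
    fin_cases k <;> fin_cases l <;> simp at hkl ⊢ <;> omega
  · have hτ : τ i * τ i = 1 := Subtype.ext (swap_mul_self _ _)
    calc φ (doubleSwap _) = φ (τ i * τ j) := rfl
      _ = φ (τ i * τ i) := by rw [map_mul, map_mul]; exact congrArg (φ (τ i) * ·) hφij.symm
      _ = 1 := by rw [hτ, map_one]

theorem map_doubleSwap_eq_one {H : Type*} [Group H] [Finite H] (φ : FSym Ω →* H)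
    {x : Fin 4 → Ω} (hx : Injective x) : φ (doubleSwap x) = 1 := by
  obtain ⟨y, hy, hφy⟩ := exists_map_doubleSwap_eq_one φ
  exact isConj_one_left.mp (hφy ▸ φ.map_isConj (isConj_doubleSwap hx hy))

end FSym

theorem symEnrichment_not_residuallyFinite_general (Γ Ω : Type*) [Group Γ] [MulAction Γ Ω]
    [Infinite Ω] :
    ¬ (∀ g : FSym Ω ⋊[fsymConj Γ Ω] Γ, g ≠ 1 →
        ∃ (H : Type) (_ : Group H) (_ : Fintype H)
          (ψ : (FSym Ω ⋊[fsymConj Γ Ω] Γ) →* H), ψ g ≠ 1) := by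
  classical
  intro h
  set x : Fin 4 → Ω := Infinite.natEmbedding Ω ∘ Fin.val
  have hx : Injective x := (Infinite.natEmbedding Ω).injective.comp Fin.val_injective
  have hg : SemidirectProduct.inl (FSym.doubleSwap x) ≠ (1 : FSym Ω ⋊[fsymConj Γ Ω] Γ) :=
    (map_ne_one_iff _ SemidirectProduct.inl_injective).mpr (FSym.doubleSwap_ne_one hx)
  obtain ⟨H, _, _, ψ, hψ⟩ := h _ hg
  exact hψ (FSym.map_doubleSwap_eq_one (ψ.comp SemidirectProduct.inl) hx)

/-- if `Γ` acts transitively on an infinite set `Ω`, the symmetric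
enrichment `S(Γ,Ω) = FSym(Ω) ⋊ Γ` is not residually finite. -/
theorem symEnrichment_not_residuallyFinite (Γ Ω : Type*) [Group Γ] [MulAction Γ Ω]
    [MulAction.IsPretransitive Γ Ω] [Infinite Ω] :
    ¬ (∀ g : FSym Ω ⋊[fsymConj Γ Ω] Γ, g ≠ 1 →
        ∃ (H : Type) (_ : Group H) (_ : Fintype H)
          (ψ : (FSym Ω ⋊[fsymConj Γ Ω] Γ) →* H), ψ g ≠ 1) :=
  symEnrichment_not_residuallyFinite_general Γ Ω
end

section
/- Let R be a commutative unital ring and V a set with |V| ≥ 6. Let Γ act transitively on V, let E(Γ,V,R) = E_V(R) ⋊ Γ be the elementary enrichment, and let N be a normal subgroup of E(Γ,V,R). If there exist distinct v, w ∈ V with E_{v,w}(1) ∈ N, then E_V(R) ≤ N. -/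
/-- The rank-one endomorphism of the free module `R^V` sending `u` to
`(u v) • (single w 1)`. -/
noncomputable def elemMap (R : Type*) [CommRing R] {V : Type*} (v w : V) :
    Module.End R (V →₀ R) :=
  (Finsupp.lsingle w).comp (Finsupp.lapply v)

lemma elemMap_mul_self {R : Type*} [CommRing R] {V : Type*} {v w : V} (h : v ≠ w) :
    (elemMap R v w) * (elemMap R v w) = 0 := by
  apply LinearMap.ext
  intro u
  simp [elemMap, Module.End.mul_apply, Finsupp.single_apply, h, Ne.symm h]

/-- The transvection `E_{v,w}(r)` of the free module `R^V`. -/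
noncomputable def transvection (R : Type*) [CommRing R] {V : Type*} (v w : V)
    (h : v ≠ w) (r : R) : (Module.End R (V →₀ R))ˣ where
  val := 1 + r • elemMap R v w
  inv := 1 + (-r) • elemMap R v w
  val_inv := by
    have key : (r • elemMap R v w) * ((-r) • elemMap R v w) = 0 := by
      rw [smul_mul_smul_comm, elemMap_mul_self h, smul_zero]
    rw [mul_add, mul_one, add_mul, one_mul, key, add_zero, add_assoc, ← add_smul,
      add_neg_cancel, zero_smul, add_zero]
  inv_val := by
    have key : ((-r) • elemMap R v w) * (r • elemMap R v w) = 0 := by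
      rw [smul_mul_smul_comm, elemMap_mul_self h, smul_zero]
    rw [mul_add, mul_one, add_mul, one_mul, key, add_zero, add_assoc, ← add_smul,
      neg_add_cancel, zero_smul, add_zero]

/-- `E_V(R)`: the subgroup of `Aut_R(R^V)` generated by all transvections. -/
noncomputable def EV (R : Type*) [CommRing R] (V : Type*) :
    Subgroup (Module.End R (V →₀ R))ˣ :=
  Subgroup.closure {u | ∃ (v w : V) (h : v ≠ w) (r : R), u = transvection R v w h r}

/-- A transvection, as an element of `E_V(R)`. -/
noncomputable def transEV (R : Type*) [CommRing R] {V : Type*} (v w : V) (h : v ≠ w)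
    (r : R) : EV R V :=
  ⟨transvection R v w h r, Subgroup.subset_closure ⟨v, w, h, r, rfl⟩⟩

/-!
Conjugating by elements of `E_V(R)` alone suffices. Since `elemMap x w * elemMap v x = elemMap v w`
and all other products of these rank-one maps vanish, `⁅E_{x,w}(s), E_{v,x}(r)⁆ = E_{v,w}(r s)`.
A normal subgroup containing `E_{a,b}(1)` therefore contains every `E_{a,c}(s)` and every
`E_{c,b}(s)`, and with two auxiliary points `x, y` the chain
`E_{v,w} → E_{x,w} → E_{x,y} → E_{a,y} → E_{a,b}(r)` reaches every transvection.
-/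

section Transvections

open scoped commutatorElement

variable {R : Type*} [CommRing R] {V : Type*}

lemma elemMap_mul_elemMap_same (a b c : V) :
    elemMap R a b * elemMap R c a = elemMap R c b := by
  ext
  simp [elemMap]

lemma elemMap_mul_elemMap_of_ne {a d : V} (b c : V) (h : d ≠ a) :
    elemMap R a b * elemMap R c d = 0 := by
  ext
  simp [elemMap, Finsupp.single_eq_of_ne' h]

lemma commutatorElement_transEV {v x w : V} (hvx : v ≠ x) (hxw : x ≠ w) (hvw : v ≠ w)
    (r s : R) :
    ⁅transEV R x w hxw s, transEV R v x hvx r⁆ = transEV R v w hvw (r * s) := by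
  apply Subtype.ext
  apply Units.ext
  change (1 + s • elemMap R x w) * (1 + r • elemMap R v x) * (1 + (-s) • elemMap R x w) *
    (1 + (-r) • elemMap R v x) = 1 + (r * s) • elemMap R v w
  have hxw_vx : elemMap R x w * elemMap R v x = elemMap R v w := elemMap_mul_elemMap_same x w v
  have hvx_vx : elemMap R v x * elemMap R v x = 0 := elemMap_mul_elemMap_of_ne x v hvx.symm
  have hxw_xw : elemMap R x w * elemMap R x w = 0 := elemMap_mul_elemMap_of_ne w x hxw.symm
  have hvx_xw : elemMap R v x * elemMap R x w = 0 := elemMap_mul_elemMap_of_ne x x hvw.symm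
  have hvw_vx : elemMap R v w * elemMap R v x = 0 := elemMap_mul_elemMap_of_ne w v hvx.symm
  have hvw_xw : elemMap R v w * elemMap R x w = 0 := elemMap_mul_elemMap_of_ne w x hvw.symm
  simp only [mul_add, add_mul, mul_one, one_mul, smul_mul_smul_comm, hxw_vx, hvx_vx,
    hxw_xw, hvx_xw, hvw_vx, hvw_xw, smul_zero, add_zero]
  module

variable {N : Subgroup (EV R V)} [N.Normal]

lemma transEV_mem_of_one_mem_same_source {a b c : V} (hab : a ≠ b) (hbc : b ≠ c) (hac : a ≠ c)
    (h : transEV R a b hab 1 ∈ N) (s : R) : transEV R a c hac s ∈ N := by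
  have hcomm := Subgroup.commutator_le_right ⊤ N
    (Subgroup.commutator_mem_commutator (Subgroup.mem_top (transEV R b c hbc s)) h)
  rwa [commutatorElement_transEV hab hbc hac, one_mul] at hcomm

lemma transEV_mem_of_one_mem_same_target {a b c : V} (hab : a ≠ b) (hbc : b ≠ c) (hac : a ≠ c)
    (h : transEV R b c hbc 1 ∈ N) (r : R) : transEV R a c hac r ∈ N := by
  have hcomm := Subgroup.commutator_le_left N ⊤
    (Subgroup.commutator_mem_commutator h (Subgroup.mem_top (transEV R a b hab r)))
  rwa [commutatorElement_transEV hab hbc hac, mul_one] at hcomm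

lemma transEV_mem_of_one_mem (hV : ∃ s : Finset V, 5 ≤ s.card) {v w : V} (hvw : v ≠ w)
    (hmem : transEV R v w hvw 1 ∈ N) {a b : V} (hab : a ≠ b) (r : R) :
    transEV R a b hab r ∈ N := by
  classical
  obtain ⟨s, hs⟩ := hV
  obtain ⟨x, -, hx⟩ := Finset.exists_mem_notMem_of_card_lt_card
    (Finset.card_le_three.trans_lt (by omega) : ({v, w, a} : Finset V).card < s.card)
  obtain ⟨y, -, hy⟩ := Finset.exists_mem_notMem_of_card_lt_card
    (Finset.card_le_four.trans_lt (by omega) : ({x, w, a, b} : Finset V).card < s.card)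
  simp only [Finset.mem_insert, Finset.mem_singleton, not_or] at hx hy
  obtain ⟨hxv, hxw, hxa⟩ := hx
  obtain ⟨hyx, hyw, hya, hyb⟩ := hy
  have hxw_mem := transEV_mem_of_one_mem_same_target hxv hvw hxw hmem 1
  have hxy_mem := transEV_mem_of_one_mem_same_source hxw (Ne.symm hyw) (Ne.symm hyx) hxw_mem 1
  have hay_mem := transEV_mem_of_one_mem_same_target (Ne.symm hxa) (Ne.symm hyx) (Ne.symm hya)
    hxy_mem 1
  exact transEV_mem_of_one_mem_same_source (Ne.symm hya) hyb hab hay_mem r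

lemma eq_top_of_transEV_one_mem (hV : ∃ s : Finset V, 5 ≤ s.card) {v w : V} (hvw : v ≠ w)
    (hmem : transEV R v w hvw 1 ∈ N) : N = ⊤ := by
  refine eq_top_iff.2 <|
    Subgroup.closure_closure_coe_preimage.ge.trans <| (Subgroup.closure_le N).2 ?_
  rintro ⟨_, _⟩ ⟨a, b, hab, r, rfl⟩
  exact transEV_mem_of_one_mem hV hvw hmem hab r

end Transvections

theorem elementary_enrichment_normal_subgroup_general {Γ V : Type*} [Group Γ] (R : Type*) [CommRing R]
    (hV : ∃ s : Finset V, 6 ≤ s.card)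
    (φ : Γ →* MulAut (EV R V))
    (N : Subgroup (EV R V ⋊[φ] Γ)) (hN : N.Normal)
    (v w : V) (hvw : v ≠ w)
    (hmem : SemidirectProduct.inl (transEV R v w hvw 1) ∈ N) :
    ∀ x : EV R V, SemidirectProduct.inl x ∈ N := by
  have := hN.comap SemidirectProduct.inl
  have htop : N.comap SemidirectProduct.inl = ⊤ :=
    eq_top_of_transEV_one_mem (hV.imp fun _ hs => by omega) hvw hmem
  exact fun x => Subgroup.mem_comap.1 (htop ▸ Subgroup.mem_top x)

/-- in the elementary enrichment `E(Γ,V,R) = E_V(R) ⋊ Γ`, with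
`|V| ≥ 6` and `Γ` acting transitively on `V` (and on `E_V(R)` by relabelling
transvections), any normal subgroup `N` containing some transvection
`E_{v,w}(1)` contains all of `E_V(R)`. -/
theorem elementary_enrichment_normal_subgroup {Γ V : Type*} [Group Γ] [MulAction Γ V]
    [MulAction.IsPretransitive Γ V] (R : Type*) [CommRing R]
    (hV : ∃ s : Finset V, 6 ≤ s.card)
    (φ : Γ →* MulAut (EV R V))
    (hφ : ∀ (g : Γ) (v w : V) (h : v ≠ w) (r : R),
      φ g (transEV R v w h r) =
        transEV R (g • v) (g • w) (fun e => h (MulAction.injective g e)) r)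
    (N : Subgroup (EV R V ⋊[φ] Γ)) (hN : N.Normal)
    (v w : V) (hvw : v ≠ w)
    (hmem : SemidirectProduct.inl (transEV R v w hvw 1) ∈ N) :
    ∀ x : EV R V, SemidirectProduct.inl x ∈ N :=
  elementary_enrichment_normal_subgroup_general R hV φ N hN v w hvw hmem
end

section
/- Let Γ be a finitely generated group acting transitively on an infinite set V, and let R be a commutative unital ring with 1 ≠ 0. Then the elementary enrichment E(Γ,V,R) = E_V(R) ⋊ Γ is not residually finite. -/
open scoped commutatorElement

lemma comm_aux {M : Type*} [Ring M] (A B C D : M) (hA : A * A = 0) (hB : B * B = 0)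
    (hBA : B * A = 0) (hC : A + C = 0) (hD : B + D = 0) :
    (1 + A) * (1 + B) * (1 + C) * (1 + D) = 1 + A * B := by
  have hC' : C = -A := (neg_eq_of_add_eq_zero_right hC).symm
  have hD' : D = -B := (neg_eq_of_add_eq_zero_right hD).symm
  rw [hC', hD', ← sub_eq_add_neg, ← sub_eq_add_neg]
  have hA' : ∀ x : M, A * (A * x) = 0 := fun x => by rw [← mul_assoc, hA, zero_mul]
  have hB' : ∀ x : M, B * (B * x) = 0 := fun x => by rw [← mul_assoc, hB, zero_mul]
  have hBA' : ∀ x : M, B * (A * x) = 0 := fun x => by rw [← mul_assoc, hBA, zero_mul]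
  simp only [mul_add, add_mul, mul_sub, sub_mul, mul_one, one_mul, mul_assoc,
    hA, hB, hBA, hA', hB', hBA', mul_zero, add_zero, zero_mul, sub_zero, zero_sub]
  abel

lemma elemMap_mul {R : Type*} [CommRing R] {V : Type*} (u v w : V) :
    elemMap R v w * elemMap R u v = elemMap R u w := by
  apply LinearMap.ext
  intro x
  simp [elemMap, Module.End.mul_apply]

lemma elemMap_mul_zero {R : Type*} [CommRing R] {V : Type*} {u v w : V} (h : u ≠ w) :
    elemMap R u v * elemMap R v w = 0 := by
  apply LinearMap.ext
  intro x
  simp [elemMap, Module.End.mul_apply, Finsupp.single_eq_of_ne' (Ne.symm h)]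

lemma transvection_comm {R : Type*} [CommRing R] {V : Type*} {u v w : V}
    (huv : u ≠ v) (hvw : v ≠ w) (huw : u ≠ w) (r s : R) :
    ⁅transvection R v w hvw r, transvection R u v huv s⁆ = transvection R u w huw (r * s) := by
  apply Units.ext
  rw [commutatorElement_def]
  show (1 + r • elemMap R v w) * (1 + s • elemMap R u v) * (1 + (-r) • elemMap R v w) *
      (1 + (-s) • elemMap R u v) = 1 + (r * s) • elemMap R u w
  have hA : (r • elemMap R v w) * (r • elemMap R v w) = 0 := by
    rw [smul_mul_smul_comm, elemMap_mul_self hvw, smul_zero]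
  have hB : (s • elemMap R u v) * (s • elemMap R u v) = 0 := by
    rw [smul_mul_smul_comm, elemMap_mul_self huv, smul_zero]
  have hBA : (s • elemMap R u v) * (r • elemMap R v w) = 0 := by
    rw [smul_mul_smul_comm, elemMap_mul_zero huw, smul_zero]
  have hC : r • elemMap R v w + (-r) • elemMap R v w = 0 := by
    rw [← add_smul, add_neg_cancel, zero_smul]
  have hD : s • elemMap R u v + (-s) • elemMap R u v = 0 := by
    rw [← add_smul, add_neg_cancel, zero_smul]
  have key := comm_aux (r • elemMap R v w) (s • elemMap R u v) ((-r) • elemMap R v w)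
    ((-s) • elemMap R u v) hA hB hBA hC hD
  rw [key, smul_mul_smul_comm, elemMap_mul]

lemma transEV_comm {R : Type*} [CommRing R] {V : Type*} {u v w : V}
    (huv : u ≠ v) (hvw : v ≠ w) (huw : u ≠ w) (r s : R) :
    ⁅transEV R v w hvw r, transEV R u v huv s⁆ = transEV R u w huw (r * s) := by
  apply Subtype.ext
  have : ((⁅transEV R v w hvw r, transEV R u v huv s⁆ : EV R V) :
      (Module.End R (V →₀ R))ˣ) = ⁅(transvection R v w hvw r), (transvection R u v huv s)⁆ := by
    simp [commutatorElement_def, transEV]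
  rw [this]
  exact transvection_comm huv hvw huw r s

lemma propagate {V H : Type*} [Infinite V] [Group H]
    (τ : ∀ x y : V, x ≠ y → H)
    (hrel : ∀ (u v w : V) (huv : u ≠ v) (hvw : v ≠ w) (huw : u ≠ w),
      τ u w huw = ⁅τ v w hvw, τ u v huv⁆)
    {a b : V} (hab : a ≠ b) (h1 : τ a b hab = 1)
    (v w : V) (hvw : v ≠ w) : τ v w hvw = 1 := by
  classical
  have step1 : ∀ (c : V) (hc : a ≠ c), τ a c hc = 1 := by
    intro c hc
    by_cases hcb : c = b
    · subst hcb; exact h1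
    · rw [hrel a b c hab (fun e => hcb e.symm) hc, h1, commutatorElement_one_right]
  have step2 : ∀ (x y : V) (hxy : x ≠ y), x ≠ a → y ≠ a → τ x y hxy = 1 := by
    intro x y hxy hxa hya
    rw [hrel x a y hxa (fun e => hya e.symm) hxy, step1 y (fun e => hya e.symm),
      commutatorElement_one_left]
  have step3 : ∀ (x : V) (hxa : x ≠ a), τ x a hxa = 1 := by
    intro x hxa
    obtain ⟨c, hc⟩ := Infinite.exists_notMem_finset ({x, a} : Finset V)
    simp only [Finset.mem_insert, Finset.mem_singleton, not_or] at hc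
    rw [hrel x c a (fun e => hc.1 e.symm) hc.2 hxa,
      step2 x c (fun e => hc.1 e.symm) hxa hc.2, commutatorElement_one_right]
  by_cases hva : v = a
  · subst hva; exact step1 w hvw
  · by_cases hwa : w = a
    · subst hwa; exact step3 v hvw
    · exact step2 v w hvw hva hwa

lemma ultra_pigeon {H : Type*} [Fintype H] (U : Ultrafilter ℕ) (χ : ℕ → H) :
    ∃ h : H, {j | χ j = h} ∈ U := by
  have hU : (⋃ h ∈ (Set.univ : Set H), {j | χ j = h}) ∈ U := by
    have : (⋃ h ∈ (Set.univ : Set H), {j | χ j = h}) = Set.univ := by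
      ext j; simp
    rw [this]; exact Filter.univ_mem
  rcases (Ultrafilter.finite_biUnion_mem_iff Set.finite_univ).mp hU with ⟨h, _, hh⟩
  exact ⟨h, hh⟩

/-- if `Γ` is a finitely generated group acting transitively on an
infinite set `V` and `R` is a nontrivial commutative unital ring, then the
elementary enrichment `E(Γ,V,R) = E_V(R) ⋊ Γ` is not residually finite. -/
theorem elementary_enrichment_not_residuallyFinite {Γ V : Type*} [Group Γ]
    [MulAction Γ V] [MulAction.IsPretransitive Γ V] [Infinite V]
    (R : Type*) [CommRing R] [Nontrivial R]
    (hfg : ∃ S : Finset Γ, Subgroup.closure (S : Set Γ) = ⊤)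
    (φ : Γ →* MulAut (EV R V))
    (hφ : ∀ (g : Γ) (v w : V) (h : v ≠ w) (r : R),
      φ g (transEV R v w h r) =
        transEV R (g • v) (g • w) (fun e => h (MulAction.injective g e)) r) :
    ¬ (∀ g : EV R V ⋊[φ] Γ, g ≠ 1 →
        ∃ (H : Type) (_ : Group H) (_ : Fintype H)
          (ψ : (EV R V ⋊[φ] Γ) →* H), ψ g ≠ 1) := by
  classical
  intro hRF
  set f : ℕ ↪ V := Infinite.natEmbedding V with hf
  have h01 : f 0 ≠ f 1 := fun e => by simpa using f.injective e
  set t : ↥(EV R V) := transEV R (f 0) (f 1) h01 1 with htdef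
  -- the witness element is nontrivial
  have ht : (SemidirectProduct.inl t : EV R V ⋊[φ] Γ) ≠ 1 := by
    intro hEq
    have h2 : t = 1 := SemidirectProduct.inl_injective (hEq.trans (map_one _).symm)
    have h3 : (1 : Module.End R (V →₀ R)) + (1 : R) • elemMap R (f 0) (f 1) = 1 := by
      have := congrArg (fun x : ↥(EV R V) => ((x : (Module.End R (V →₀ R))ˣ) :
        Module.End R (V →₀ R))) h2
      simpa [htdef, transEV, transvection] using this
    have h5 := congrArg
      (fun g : Module.End R (V →₀ R) => (g (Finsupp.single (f 0) 1)) (f 1)) h3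
    simp [elemMap, Finsupp.single_apply, h01] at h5
  obtain ⟨H, _, _, ψ, hψ⟩ := hRF _ ht
  -- the image of transvections in the finite group H
  set η : ↥(EV R V) →* H := ψ.comp (SemidirectProduct.inl) with hη
  set τ : ∀ x y : V, x ≠ y → H := fun x y h => η (transEV R x y h 1) with hτ
  have hrel : ∀ (u v w : V) (huv : u ≠ v) (hvw : v ≠ w) (huw : u ≠ w),
      τ u w huw = ⁅τ v w hvw, τ u v huv⁆ := by
    intro u v w huv hvw huw
    have h1 : transEV R u w huw (1 : R) = ⁅transEV R v w hvw 1, transEV R u v huv 1⁆ := by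
      rw [transEV_comm huv hvw huw 1 1, one_mul]
    calc τ u w huw = η (transEV R u w huw 1) := rfl
      _ = η ⁅transEV R v w hvw 1, transEV R u v huv 1⁆ := by rw [h1]
      _ = ⁅τ v w hvw, τ u v huv⁆ := map_commutatorElement η _ _
  -- Ramsey-type argument via an ultrafilter: find a monochromatic triangle
  set χ : ℕ → ℕ → H := fun i j =>
    if h : f i ≠ f j then τ (f i) (f j) h else 1 with hχ
  set U : Ultrafilter ℕ := Filter.hyperfilter ℕ with hU
  have hne : ∀ i : ℕ, {j | j ≠ i} ∈ U := by
    intro i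
    apply Filter.hyperfilter_le_cofinite
    rw [Filter.mem_cofinite]
    have h : {j | j ≠ i}ᶜ = {i} := by ext x; simp
    rw [h]; exact Set.finite_singleton i
  have hpig : ∀ i : ℕ, ∃ h : H, {j | χ i j = h} ∈ U := fun i => ultra_pigeon U (χ i)
  choose c hc using hpig
  obtain ⟨h₀, hh₀⟩ := ultra_pigeon U c
  obtain ⟨i₀, hi₀⟩ := Ultrafilter.nonempty_of_mem hh₀
  obtain ⟨j₀, hj₀⟩ := Ultrafilter.nonempty_of_mem
    (Filter.inter_mem (Filter.inter_mem hh₀ (hc i₀)) (hne i₀))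
  obtain ⟨k₀, hk₀⟩ := Ultrafilter.nonempty_of_mem
    (Filter.inter_mem (Filter.inter_mem (Filter.inter_mem
      (Filter.inter_mem hh₀ (hc i₀)) (hc j₀)) (hne i₀)) (hne j₀))
  obtain ⟨⟨⟨⟨hk1, hk2⟩, hk3⟩, hk4⟩, hk5⟩ := hk₀
  obtain ⟨⟨hj1, hj2⟩, hj3⟩ := hj₀
  -- distinctness of the three points
  have hij : f i₀ ≠ f j₀ := fun e => hj3 (f.injective e.symm)
  have hjk : f j₀ ≠ f k₀ := fun e => hk5 (f.injective e.symm)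
  have hik : f i₀ ≠ f k₀ := fun e => hk4 (f.injective e.symm)
  -- the three colors agree
  have hci : c i₀ = h₀ := hi₀
  have hcj : c j₀ = h₀ := hj1
  have e1 : τ (f i₀) (f j₀) hij = h₀ := by
    have h' : χ i₀ j₀ = c i₀ := hj2
    rw [show χ i₀ j₀ = τ (f i₀) (f j₀) hij from dif_pos hij] at h'
    rw [h', hci]
  have e2 : τ (f i₀) (f k₀) hik = h₀ := by
    have h' : χ i₀ k₀ = c i₀ := hk2
    rw [show χ i₀ k₀ = τ (f i₀) (f k₀) hik from dif_pos hik] at h'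
    rw [h', hci]
  have e3 : τ (f j₀) (f k₀) hjk = h₀ := by
    have h' : χ j₀ k₀ = c j₀ := hk3
    rw [show χ j₀ k₀ = τ (f j₀) (f k₀) hjk from dif_pos hjk] at h'
    rw [h', hcj]
  -- hence the common color is trivial
  have h₀1 : h₀ = 1 := by
    have := hrel (f i₀) (f j₀) (f k₀) hij hjk hik
    rw [e1, e2, e3] at this
    rw [this, commutatorElement_def, mul_inv_cancel_right, mul_inv_cancel]
  -- so some transvection dies in H, hence all do
  have hbase : τ (f i₀) (f j₀) hij = 1 := by rw [e1, h₀1]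
  have hzero : τ (f 0) (f 1) h01 = 1 := propagate τ hrel hij hbase (f 0) (f 1) h01
  exact hψ hzero
end
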